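/- Let D be a digraph with n ≥ 2 vertices and a ≥ nβ arcs, where β = max(1-α, α·d⁺_max) and d⁺_max is the maximum outdegree. Then ‖D_α‖_* ≤ a/n + √((n-1)[(1-α)² a + α² Σ_{i=1}^n (d_i⁺)² − a²/n²]). -/

import Mathlib

open Matrix Real

/-- Adjacency matrix (over ℝ) of a digraph given by an arc relation on `Fin n`. -/
def adjMat {n : ℕ} (R : Fin n → Fin n → Prop) [DecidableRel R] :
    Matrix (Fin n) (Fin n) ℝ :=
  Matrix.of fun i j => if R i j then 1 else 0

/-- Outdegree of a vertex. -/
def outdeg {n : ℕ} (R : Fin n → Fin n → Prop) [DecidableRel R] (i : Fin n) : ℕ :=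
  (Finset.univ.filter fun j => R i j).card

/-- Indegree of a vertex. -/
def indeg {n : ℕ} (R : Fin n → Fin n → Prop) [DecidableRel R] (j : Fin n) : ℕ :=
  (Finset.univ.filter fun i => R i j).card

/-- The `A_α` matrix of a digraph: `α Δ⁺ + (1-α) A`. -/
noncomputable def Amat {n : ℕ} (α : ℝ) (R : Fin n → Fin n → Prop) [DecidableRel R] :
    Matrix (Fin n) (Fin n) ℝ :=
  α • Matrix.diagonal (fun i => (outdeg R i : ℝ)) + (1 - α) • adjMat R

/-- The singular values of a real square matrix `M`: the nonnegative square roots of the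
eigenvalues of `M Mᵀ` (`Mᴴ = Mᵀ` over ℝ). -/
noncomputable def singVals {m : Type*} [Fintype m] [DecidableEq m]
    (M : Matrix m m ℝ) (i : m) : ℝ :=
  Real.sqrt ((Matrix.isHermitian_mul_conjTranspose_self M).eigenvalues i)

/-- Trace norm: sum of the singular values. -/
noncomputable def traceNorm {m : Type*} [Fintype m] [DecidableEq m]
    (M : Matrix m m ℝ) : ℝ :=
  ∑ i, singVals M i

/-- Spectral norm: the largest singular value. -/
noncomputable def specNorm {m : Type*} [Fintype m] [DecidableEq m]
    (M : Matrix m m ℝ) : ℝ :=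
  ⨆ i, singVals M i

/-! Let `S = Σ σᵢ²`, which is the squared Frobenius norm `(1-α)² a + α² Σ (dᵢ⁺)²`. Cauchy–Schwarz
on all singular values but one, `σ`, gives `‖D_α‖_* ≤ σ + √((n-1)(S - σ²))`. Testing `A_α A_αᵀ`
against the all-ones vector yields a singular value `σ ≥ a/n`, because the entries of `A_α` sum
to `a`. Finally `x ↦ x + √((n-1)(S - x²))` is decreasing for `x ≥ √(S/n)`, and `a ≥ nβ` gives
`S ≤ βa ≤ a²/n`, i.e. `a/n ≥ √(S/n)`, so `σ` may be replaced by `a/n`. -/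

theorem add_sqrt_mul_sub_sq_le_add_sqrt_mul_sub_sq {k S c x : ℝ} (hk : 0 ≤ k) (hc : 0 ≤ c)
    (hcx : c ≤ x) (hxS : x ^ 2 ≤ S) (hSc : S ≤ (k + 1) * c ^ 2) :
    x + √(k * (S - x ^ 2)) ≤ c + √(k * (S - c ^ 2)) := by
  have hcx2 : c ^ 2 ≤ x ^ 2 := pow_le_pow_left₀ hc hcx 2
  set T := √(k * (S - x ^ 2))
  set Q := √(k * (S - c ^ 2))
  have hT2 : T ^ 2 = k * (S - x ^ 2) := Real.sq_sqrt (mul_nonneg hk (by linarith))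
  have hQ2 : Q ^ 2 = k * (S - c ^ 2) := Real.sq_sqrt (mul_nonneg hk (by linarith))
  have hT0 : 0 ≤ T := Real.sqrt_nonneg _
  have hTQ : T ≤ Q := Real.sqrt_le_sqrt (by nlinarith)
  have hQc : Q ≤ k * c := Real.sqrt_le_iff.mpr ⟨by positivity, by nlinarith⟩
  have hTx : T ≤ k * x := Real.sqrt_le_iff.mpr ⟨mul_nonneg hk (hc.trans hcx),
    by nlinarith [mul_le_mul_of_nonneg_left (show S - x ^ 2 ≤ k * x ^ 2 by nlinarith) hk]⟩
  -- `(Q - T)(Q + T) = k (x - c)(x + c)` while `Q + T ≤ k (x + c)`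
  have hprod : (x - c) * (Q + T) ≤ (Q - T) * (Q + T) := by
    nlinarith [mul_le_mul_of_nonneg_left (add_le_add hQc hTx) (sub_nonneg.2 hcx)]
  by_contra! h
  have hQ : Q = 0 := by nlinarith
  have hS : S - c ^ 2 ≤ 0 := by
    have hk0 : k * (S - c ^ 2) = 0 := by rw [← hQ2, hQ]; ring
    nlinarith [mul_le_mul_of_nonneg_left (show S - c ^ 2 ≤ k * c ^ 2 by linarith)
      (show 0 ≤ S - c ^ 2 by linarith)]
  nlinarith

section SumBounds

variable {ι : Type*} [Fintype ι]

theorem sum_le_add_sqrt_card_sub_one_mul {σ : ι → ℝ} (i₀ : ι) :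
    ∑ i, σ i ≤ σ i₀ + √((Fintype.card ι - 1) * (∑ i, σ i ^ 2 - σ i₀ ^ 2)) := by
  classical
  have hcard : ((Finset.univ.erase i₀).card : ℝ) = Fintype.card ι - 1 := by
    rw [Finset.card_erase_of_mem (Finset.mem_univ i₀), Finset.card_univ,
      Nat.cast_sub (Fintype.card_pos_iff.mpr ⟨i₀⟩), Nat.cast_one]
  rw [← Finset.add_sum_erase _ _ (Finset.mem_univ i₀),
    ← Finset.add_sum_erase _ (fun i => σ i ^ 2) (Finset.mem_univ i₀), add_sub_cancel_left, ← hcard]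
  gcongr
  exact (le_abs_self _).trans (Real.abs_le_sqrt sq_sum_le_card_mul_sum_sq)

theorem sum_le_add_sqrt_of_sum_sq_le_card_mul_sq {σ : ι → ℝ} {c : ℝ} {i₀ : ι} (hc : 0 ≤ c)
    (hci₀ : c ≤ σ i₀) (hS : ∑ i, σ i ^ 2 ≤ Fintype.card ι * c ^ 2) :
    ∑ i, σ i ≤ c + √((Fintype.card ι - 1) * (∑ i, σ i ^ 2 - c ^ 2)) := by
  have hcard : (1 : ℝ) ≤ Fintype.card ι := Nat.one_le_cast.mpr (Fintype.card_pos_iff.mpr ⟨i₀⟩)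
  calc ∑ i, σ i ≤ σ i₀ + √((Fintype.card ι - 1) * (∑ i, σ i ^ 2 - σ i₀ ^ 2)) :=
        sum_le_add_sqrt_card_sub_one_mul i₀
    _ ≤ c + √((Fintype.card ι - 1) * (∑ i, σ i ^ 2 - c ^ 2)) :=
        add_sqrt_mul_sub_sq_le_add_sqrt_mul_sub_sq (sub_nonneg.2 hcard) hc hci₀
          (Finset.single_le_sum (fun i _ => sq_nonneg (σ i)) (Finset.mem_univ i₀))
          (by rwa [sub_add_cancel])

theorem sq_one_sub_mul_sum_add_sq_mul_sum_sq_le {α β : ℝ} {d : ι → ℝ} (hd : ∀ i, 0 ≤ d i)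
    (hα0 : 0 ≤ α) (hα1 : α ≤ 1) (hβ₁ : 1 - α ≤ β) (hβ₂ : ∀ i, α * d i ≤ β) :
    (1 - α) ^ 2 * ∑ i, d i + α ^ 2 * ∑ i, d i ^ 2 ≤ β * ∑ i, d i := by
  simp only [Finset.mul_sum, ← Finset.sum_add_distrib]
  refine Finset.sum_le_sum fun i _ => ?_
  nlinarith [mul_le_mul_of_nonneg_right hβ₁ (mul_nonneg (sub_nonneg.2 hα1) (hd i)),
    mul_le_mul_of_nonneg_left (hβ₂ i) (mul_nonneg hα0 (hd i))]

end SumBounds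

theorem Matrix.IsHermitian.exists_dotProduct_mulVec_le {m : Type*} [Fintype m] [DecidableEq m]
    [Nonempty m] {A : Matrix m m ℝ} (hA : A.IsHermitian) (v : m → ℝ) :
    ∃ i, v ⬝ᵥ (A *ᵥ v) ≤ hA.eigenvalues i * (v ⬝ᵥ v) := by
  set U : Matrix m m ℝ := (hA.eigenvectorUnitary : Matrix m m ℝ)
  have hUU : U * Uᵀ = 1 := Matrix.mem_unitaryGroup_iff.mp hA.eigenvectorUnitary.2
  set w : m → ℝ := Uᵀ *ᵥ v with hw
  have hquad : v ⬝ᵥ (A *ᵥ v) = ∑ i, hA.eigenvalues i * w i ^ 2 := by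
    conv_lhs => rw [hA.spectral_theorem, Unitary.conjStarAlgAut_apply]
    rw [← mulVec_mulVec, ← mulVec_mulVec, dotProduct_mulVec, ← mulVec_transpose]
    simp only [mulVec_diagonal, dotProduct, star_eq_conjTranspose,
      conjTranspose_eq_transpose_of_trivial, RCLike.ofReal_real_eq_id, Function.comp_apply, id]
    exact Finset.sum_congr rfl fun i _ => by ring
  have hnorm : v ⬝ᵥ v = ∑ i, w i ^ 2 := by
    have : w ⬝ᵥ w = v ⬝ᵥ v := by
      rw [hw, dotProduct_mulVec, ← mulVec_transpose, transpose_transpose, mulVec_mulVec, hUU,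
        one_mulVec]
    rw [← this]
    simp [dotProduct, pow_two]
  obtain ⟨i₀, -, hi₀⟩ := Finset.exists_max_image Finset.univ hA.eigenvalues Finset.univ_nonempty
  refine ⟨i₀, ?_⟩
  rw [hquad, hnorm, Finset.mul_sum]
  exact Finset.sum_le_sum fun i _ =>
    mul_le_mul_of_nonneg_right (hi₀ i (Finset.mem_univ i)) (sq_nonneg _)

section SingularValues

variable {m : Type*} [Fintype m] [DecidableEq m]

theorem singVals_sq (M : Matrix m m ℝ) (i : m) :
    singVals M i ^ 2 = (isHermitian_mul_conjTranspose_self M).eigenvalues i :=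
  Real.sq_sqrt (eigenvalues_self_mul_conjTranspose_nonneg M i)

theorem singVals_nonneg (M : Matrix m m ℝ) (i : m) : 0 ≤ singVals M i :=
  Real.sqrt_nonneg _

theorem sum_singVals_sq (M : Matrix m m ℝ) :
    ∑ i, singVals M i ^ 2 = ∑ i, ∑ j, M i j ^ 2 := by
  have h := (isHermitian_mul_conjTranspose_self M).trace_eq_sum_eigenvalues
  simp only [RCLike.ofReal_real_eq_id, id] at h
  simp_rw [singVals_sq, ← h]
  simp [trace, mul_apply, pow_two]

theorem exists_abs_sum_le_card_mul_singVals [Nonempty m] (M : Matrix m m ℝ) :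
    ∃ k, |∑ i, ∑ j, M i j| ≤ Fintype.card m * singVals M k := by
  set v : m → ℝ := fun _ => 1
  obtain ⟨i, hi⟩ := (isHermitian_mul_conjTranspose_self M).exists_dotProduct_mulVec_le v
  refine ⟨i, abs_le_of_sq_le_sq ?_ (mul_nonneg (Nat.cast_nonneg _) (singVals_nonneg M i))⟩
  have hcolumns : v ⬝ᵥ ((M * Mᴴ) *ᵥ v) = ∑ k, (∑ i, M i k) ^ 2 := by
    rw [← mulVec_mulVec, dotProduct_mulVec, ← mulVec_transpose]
    simp [dotProduct, mulVec, v, pow_two]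
  calc (∑ i, ∑ j, M i j) ^ 2 = (∑ k, ∑ i, M i k) ^ 2 := by rw [Finset.sum_comm]
    _ ≤ Fintype.card m * ∑ k, (∑ i, M i k) ^ 2 := sq_sum_le_card_mul_sum_sq
    _ ≤ Fintype.card m *
        ((isHermitian_mul_conjTranspose_self M).eigenvalues i * Fintype.card m) := by
      gcongr
      rw [hcolumns] at hi
      simpa [v, dotProduct] using hi
    _ = (Fintype.card m * singVals M i) ^ 2 := by rw [mul_pow, singVals_sq]; ring

end SingularValues

section Digraph

variable {n : ℕ} (R : Fin n → Fin n → Prop) [DecidableRel R]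

theorem Amat_apply (α : ℝ) (i j : Fin n) :
    Amat α R i j =
      α * (if i = j then (outdeg R i : ℝ) else 0) + (1 - α) * (if R i j then 1 else 0) := by
  simp [Amat, adjMat, diagonal_apply]

theorem sum_Amat_apply (α : ℝ) (i : Fin n) : ∑ j, Amat α R i j = outdeg R i := by
  simp only [Amat_apply, Finset.sum_add_distrib, ← Finset.mul_sum, Finset.sum_ite_eq,
    Finset.mem_univ, if_true, Finset.sum_boole, outdeg]
  ring

theorem sum_Amat_apply_sq (hirr : ∀ i, ¬ R i i) (α : ℝ) (i : Fin n) :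
    ∑ j, Amat α R i j ^ 2 = (1 - α) ^ 2 * outdeg R i + α ^ 2 * (outdeg R i : ℝ) ^ 2 := by
  have hterm : ∀ j, Amat α R i j ^ 2 =
      α ^ 2 * (if i = j then (outdeg R i : ℝ) ^ 2 else 0) +
        (1 - α) ^ 2 * (if R i j then 1 else 0) := by
    intro j
    rw [Amat_apply]
    by_cases hij : i = j
    · subst hij; simp [hirr i, mul_pow]
    · by_cases hR : R i j <;> simp [hij, hR]
  simp only [hterm, Finset.sum_add_distrib, ← Finset.mul_sum, Finset.sum_ite_eq,
    Finset.mem_univ, if_true, Finset.sum_boole, outdeg]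
  ring

end Digraph

/-- Koolen–Moulton-type upper bound: if `a ≥ nβ` with `β = max(1-α, α d⁺_max)`, then
`‖D_α‖_* ≤ a/n + √((n-1)[(1-α)² a + α² Σ(d_i⁺)² − a²/n²])`. -/
theorem stmt_17 (n : ℕ) (hn : 2 ≤ n) (R : Fin n → Fin n → Prop) [DecidableRel R]
    (hirr : ∀ i, ¬ R i i) (α : ℝ) (hα0 : 0 ≤ α) (hα1 : α < 1)
    (a : ℕ) (ha : a = ∑ i, outdeg R i)
    (β : ℝ) (hβ : β = max (1 - α) (α * ((Finset.univ.sup (outdeg R) : ℕ) : ℝ)))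
    (haβ : (n : ℝ) * β ≤ a) :
    traceNorm (Amat α R) ≤
      (a : ℝ) / n + Real.sqrt ((n - 1) *
        ((1 - α) ^ 2 * a + α ^ 2 * (∑ i, ((outdeg R i : ℝ)) ^ 2) -
          (a : ℝ) ^ 2 / (n : ℝ) ^ 2)) := by
  have : Nonempty (Fin n) := ⟨⟨0, by omega⟩⟩
  have hn0 : (0 : ℝ) < n := by positivity
  set M := Amat α R
  have ha' : (a : ℝ) = ∑ i, (outdeg R i : ℝ) := by rw [ha, Nat.cast_sum]
  have hS : ∑ i, singVals M i ^ 2 = (1 - α) ^ 2 * a + α ^ 2 * ∑ i, (outdeg R i : ℝ) ^ 2 := by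
    simp only [sum_singVals_sq, M, sum_Amat_apply_sq R hirr, Finset.sum_add_distrib,
      ← Finset.mul_sum, ha']
  obtain ⟨i₀, hi₀⟩ := exists_abs_sum_le_card_mul_singVals M
  have hc : (a : ℝ) / n ≤ singVals M i₀ := by
    simp only [M, sum_Amat_apply, ← ha', Nat.abs_cast, Fintype.card_fin] at hi₀
    rwa [div_le_iff₀' hn0]
  have hSβ : (1 - α) ^ 2 * a + α ^ 2 * ∑ i, (outdeg R i : ℝ) ^ 2 ≤ β * a := by
    rw [ha']
    refine sq_one_sub_mul_sum_add_sq_mul_sum_sq_le (fun i => Nat.cast_nonneg _) hα0 hα1.le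
      (hβ ▸ le_max_left _ _) fun i => hβ ▸ le_max_of_le_right ?_
    exact mul_le_mul_of_nonneg_left (by exact_mod_cast Finset.le_sup (Finset.mem_univ i)) hα0
  have hSc : ∑ i, singVals M i ^ 2 ≤ Fintype.card (Fin n) * ((a : ℝ) / n) ^ 2 := by
    rw [hS, Fintype.card_fin]
    calc _ ≤ β * a := hSβ
      _ ≤ a / n * a := by gcongr; rwa [le_div_iff₀' hn0]
      _ = n * (a / n) ^ 2 := by field_simp
  have key := sum_le_add_sqrt_of_sum_sq_le_card_mul_sq (by positivity) hc hSc
  rwa [hS, Fintype.card_fin, div_pow] at key
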